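/- arXiv:0801.4432 — 2 statements merged into one kernel-verified Lean document; each statement's English description precedes it below -/
import Mathlib

section
/- Let P ⊂ ℝⁿ be a simplex with vertices v₀,…,v_d, let t ≥ 0 be an integer, and for j define Q_j = (t+d)·P + v_j. Then for any nonempty subset I ⊆ {0,…,d}, the intersection ⋂_{i∈I} Q_i equals (t+d+1−|I|)·P + ∑_{i∈I} v_i. -/
/-!
Write points as `∑ j, c j • v j`. For `s ≥ 0`, `s • P` is the set of such points with `c ≥ 0` and
`∑ c = s`, so `v i + s • P` consists of the points of total weight `s + 1` with
`c ≥ Pi.single i 1`, and `(∑ i ∈ I, v i) + (s + 1 - #I) • P` of those with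
`c ≥ ∑ i ∈ I, Pi.single i 1`. Affine independence makes the weights of a point of given total
weight unique, so the intersection over `i ∈ I` is the conjunction of the conditions
`c ≥ Pi.single i 1`, which for nonempty `I` is `c ≥ ∑ i ∈ I, Pi.single i 1`.
-/

open Pointwise Finset

lemma AffineIndependent.injOn_linearCombination {k ι E : Type*} [Ring k] [Fintype ι]
    [AddCommGroup E] [Module k E] {v : ι → E} (hv : AffineIndependent k v)
    (S : k) : Set.InjOn (Fintype.linearCombination k v) {a | ∑ i, a i = S} := by
  intro a ha b hb hab
  simp only [Fintype.linearCombination_apply] at hab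
  rw [affineIndependent_iff] at hv
  funext j
  have := hv univ (a - b) (by simp [sum_sub_distrib, ha.out, hb.out])
    (by simp [sub_smul, sum_sub_distrib, hab]) j (mem_univ j)
  exact sub_eq_zero.mp this

lemma forall_single_le_iff_sum_single_le {R ι : Type*} [Semiring R] [PartialOrder R]
    [ZeroLEOneClass R] [DecidableEq ι] {I : Finset ι} (hI : I.Nonempty)
    {c : ι → R} : (∀ i ∈ I, Pi.single i 1 ≤ c) ↔ ∑ i ∈ I, Pi.single i 1 ≤ c := by
  have hsum : ∀ j, (∑ i ∈ I, Pi.single i (1 : R)) j = if j ∈ I then 1 else 0 := by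
    intro j
    simp [Finset.sum_apply, Pi.single_apply]
  simp only [Pi.le_def, hsum, Pi.single_apply]
  constructor
  · intro h j
    split_ifs with hj
    · simpa using h j hj j
    · obtain ⟨i, hi⟩ := hI
      simpa [show j ≠ i by rintro rfl; exact hj hi] using h i hi j
  · intro h i hi j
    split_ifs with hji
    · subst hji; simpa [hi] using h j
    · exact le_trans (by split_ifs <;> norm_num) (h j)

section

variable {𝕜 ι E : Type*} [Field 𝕜] [LinearOrder 𝕜] [IsStrictOrderedRing 𝕜] [Fintype ι]
  [AddCommGroup E] [Module 𝕜 E]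

lemma smul_stdSimplex [Nonempty ι] {s : 𝕜} (hs : 0 ≤ s) :
    s • stdSimplex 𝕜 ι = {a | 0 ≤ a ∧ ∑ i, a i = s} := by
  rcases hs.eq_or_lt with rfl | hs
  · classical
    rw [Set.zero_smul_set ⟨_, single_mem_stdSimplex 𝕜 (Classical.arbitrary ι)⟩]
    ext a
    constructor
    · rintro rfl
      simp
    · rintro ⟨ha, hsum⟩
      funext i
      exact (sum_eq_zero_iff_of_nonneg fun j _ => ha j).mp hsum i (mem_univ i)
  · ext a
    simp only [Set.mem_smul_set_iff_inv_smul_mem₀ hs.ne', stdSimplex, Set.mem_ofPred_eq,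
      Pi.smul_apply, smul_eq_mul, ← Finset.mul_sum, inv_mul_eq_one₀ hs.ne', Pi.le_def,
      Pi.zero_apply]
    simp [mul_nonneg_iff_of_pos_left (inv_pos.mpr hs), eq_comm]

lemma convexHull_range_eq_image_stdSimplex (v : ι → E) :
    convexHull 𝕜 (Set.range v) = Fintype.linearCombination 𝕜 v '' stdSimplex 𝕜 ι := by
  classical
  rw [← convexHull_rangle_single_eq_stdSimplex, LinearMap.image_convexHull, ← Set.range_comp]
  congr
  ext i
  simp [Fintype.linearCombination_apply_single]

lemma smul_convexHull_range_eq_image [Nonempty ι] (v : ι → E) {s : 𝕜} (hs : 0 ≤ s) :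
    s • convexHull 𝕜 (Set.range v) =
      Fintype.linearCombination 𝕜 v '' {a | 0 ≤ a ∧ ∑ i, a i = s} := by
  rw [convexHull_range_eq_image_stdSimplex, ← image_smul_set, smul_stdSimplex hs]

lemma linearCombination_vadd_image (v : ι → E) (w : ι → 𝕜) (s : 𝕜) :
    Fintype.linearCombination 𝕜 v w +ᵥ
        Fintype.linearCombination 𝕜 v '' {a | 0 ≤ a ∧ ∑ i, a i = s} =
      Fintype.linearCombination 𝕜 v '' {c | w ≤ c ∧ ∑ i, c i = ∑ i, w i + s} := by
  rw [← Set.image_vadd_distrib]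
  congr 1
  ext c
  simp only [Set.mem_vadd_set_iff_neg_vadd_mem, vadd_eq_add, Set.mem_ofPred_eq,
    le_neg_add_iff_add_le, add_zero, Pi.add_apply, Pi.neg_apply, sum_add_distrib, sum_neg_distrib]
  constructor <;> rintro ⟨h, h'⟩ <;> exact ⟨h, by linarith⟩

theorem iInter_vadd_smul_convexHull {v : ι → E} (hv : AffineIndependent 𝕜 v) {I : Finset ι}
    (hI : I.Nonempty) {s : 𝕜} (hs : (#I : 𝕜) ≤ s + 1) :
    ⋂ i ∈ I, v i +ᵥ s • convexHull 𝕜 (Set.range v) =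
      (∑ i ∈ I, v i) +ᵥ (s + 1 - #I) • convexHull 𝕜 (Set.range v) := by
  classical
  have : Nonempty ι := ⟨hI.choose⟩
  have hs₀ : 0 ≤ s := by
    have : (1 : 𝕜) ≤ #I := by exact_mod_cast hI.card_pos
    linarith
  set L := Fintype.linearCombination 𝕜 v
  have hvertex (i : ι) : v i = L (Pi.single i 1) := by
    simp [L, Fintype.linearCombination_apply_single]
  have hface : ∑ i ∈ I, v i = L (∑ i ∈ I, Pi.single i 1) := by
    simp [map_sum, hvertex]
  have hweight : ∑ j, (∑ i ∈ I, Pi.single i (1 : 𝕜)) j = #I := by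
    simp [Finset.sum_apply]
  calc ⋂ i ∈ I, v i +ᵥ s • convexHull 𝕜 (Set.range v)
      = ⋂ i ∈ I, L '' {c | Pi.single i 1 ≤ c ∧ ∑ j, c j = s + 1} := by
        refine Set.iInter₂_congr fun i _ => ?_
        rw [smul_convexHull_range_eq_image v hs₀, hvertex i, linearCombination_vadd_image]
        simp [L, add_comm]
    _ = L '' ⋂ i ∈ I, {c | Pi.single i 1 ≤ c ∧ ∑ j, c j = s + 1} :=
        ((hv.injOn_linearCombination (s + 1)).mono
          (Set.iUnion₂_subset fun _ _ _ hc => hc.2)).image_biInter_eq hI |>.symm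
    _ = L '' {c | ∑ i ∈ I, Pi.single i 1 ≤ c ∧ ∑ j, c j = s + 1} := by
        congr 1
        ext c
        simp only [Set.mem_iInter₂, Set.mem_ofPred_eq, ← forall_single_le_iff_sum_single_le hI]
        exact ⟨fun h => ⟨fun i hi => (h i hi).1, (h _ hI.choose_spec).2⟩,
          fun h i hi => ⟨h.1 i hi, h.2⟩⟩
    _ = (∑ i ∈ I, v i) +ᵥ (s + 1 - #I) • convexHull 𝕜 (Set.range v) := by
        rw [smul_convexHull_range_eq_image v (sub_nonneg.mpr hs), hface,
          linearCombination_vadd_image, hweight, add_sub_cancel]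

end

theorem stmt9 (n d : ℕ) (v : Fin (d + 1) → (Fin n → ℝ)) (hv : AffineIndependent ℝ v)
    (t : ℕ) (I : Finset (Fin (d + 1))) (hI : I.Nonempty) :
    (⋂ i ∈ I, v i +ᵥ (((t : ℝ) + d) • convexHull ℝ (Set.range v))) =
      (∑ i ∈ I, v i) +ᵥ
        (((t : ℝ) + d + 1 - I.card) • convexHull ℝ (Set.range v)) := by
  have hcard : (#I : ℝ) ≤ t + d + 1 := by
    have : #I ≤ d + 1 := by simpa using card_le_univ I
    have : (#I : ℝ) ≤ d + 1 := by exact_mod_cast this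
    linarith [(t.cast_nonneg : (0 : ℝ) ≤ t)]
  exact iInter_vadd_smul_convexHull hv hI hcard
end

section
/- Let P be a simplex with vertices v₀,…,v_d ∈ ℝⁿ, and let t be an integer with 0 > t > −d−1. Define Q_j = (t+d)·P + v_j and Q = ⋃_j Q_j. Then (t+d+1)·P \ Q = { ∑ a_i v_i : 0 ≤ a_i < 1 for all i, ∑ a_i = t+d+1 }. -/
open Pointwise Set

/-!
A point of `(r + 1) • P` is `∑ aᵢ • vᵢ` with `aᵢ ≥ 0` and `∑ aᵢ = r + 1`, and it lies in
`v j +ᵥ r • P` exactly when it has such a representation with `a j ≥ 1` (move one unit of weight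
onto `v j`). Affine independence makes the representation unique, so the points of `(r + 1) • P`
outside every `v j +ᵥ r • P` are those whose coefficients are all below `1`.
-/

section

variable {𝕜 E ι : Type*} [Field 𝕜] [LinearOrder 𝕜] [IsStrictOrderedRing 𝕜] [AddCommGroup E]
  [Module 𝕜 E] [Fintype ι] {v : ι → E} {r : 𝕜} {x : E}

theorem mem_convexHull_range_iff :
    x ∈ convexHull 𝕜 (range v) ↔
      ∃ w : ι → 𝕜, (∀ i, 0 ≤ w i) ∧ ∑ i, w i = 1 ∧ x = ∑ i, w i • v i := by
  constructor
  · rw [convexHull_range_eq_exists_affineCombination]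
    rintro ⟨s, w, hw₀, hw₁, rfl⟩
    have hw₁' : ∑ i, (s : Set ι).indicator w i = 1 := by
      rwa [Finset.sum_indicator_subset _ s.subset_univ]
    refine ⟨(s : Set ι).indicator w, fun i => ?_, hw₁', ?_⟩
    · by_cases hi : i ∈ s <;> simp [hi, hw₀]
    · rw [Finset.affineCombination_indicator_subset _ _ s.subset_univ,
        Finset.univ.affineCombination_eq_linear_combination _ _ hw₁']
  · rintro ⟨w, hw₀, hw₁, rfl⟩
    exact mem_convexHull_of_exists_fintype w v hw₀ hw₁ (mem_range_self ·) rfl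

theorem mem_smul_convexHull_range_iff [Nonempty ι] (hr : 0 ≤ r) :
    x ∈ r • convexHull 𝕜 (range v) ↔
      ∃ a : ι → 𝕜, (∀ i, 0 ≤ a i) ∧ ∑ i, a i = r ∧ x = ∑ i, a i • v i := by
  rcases hr.eq_or_lt with rfl | hr
  · rw [zero_smul_set ((convexHull_nonempty_iff).2 (range_nonempty v)), mem_zero]
    constructor
    · rintro rfl
      exact ⟨0, fun _ => le_rfl, by simp, by simp⟩
    · rintro ⟨a, ha₀, ha₁, rfl⟩
      have ha : a = 0 := funext <| by
        simpa using (Finset.sum_eq_zero_iff_of_nonneg fun i _ => ha₀ i).1 ha₁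
      simp [ha]
  · rw [mem_smul_set_iff_inv_smul_mem₀ hr.ne', mem_convexHull_range_iff]
    constructor
    · rintro ⟨w, hw₀, hw₁, hx⟩
      refine ⟨r • w, fun i => mul_nonneg hr.le (hw₀ i), by simp [← Finset.mul_sum, hw₁], ?_⟩
      simp [mul_smul, ← Finset.smul_sum, ← hx, smul_inv_smul₀ hr.ne']
    · rintro ⟨a, ha₀, ha₁, rfl⟩
      refine ⟨r⁻¹ • a, fun i => mul_nonneg (inv_nonneg.2 hr.le) (ha₀ i), ?_, ?_⟩
      · simp [← Finset.mul_sum, ha₁, hr.ne']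
      · simp [mul_smul, Finset.smul_sum]

theorem mem_vadd_smul_convexHull_range_iff (hr : 0 ≤ r) (j : ι) :
    x ∈ v j +ᵥ r • convexHull 𝕜 (range v) ↔
      ∃ a : ι → 𝕜, (∀ i, 0 ≤ a i) ∧ 1 ≤ a j ∧ ∑ i, a i = r + 1 ∧ x = ∑ i, a i • v i := by
  classical
  have : Nonempty ι := ⟨j⟩
  rw [mem_vadd_set_iff_neg_vadd_mem, mem_smul_convexHull_range_iff hr, vadd_eq_add,
    neg_add_eq_sub]
  constructor
  · rintro ⟨c, hc₀, hc₁, hc⟩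
    refine ⟨c + Pi.single j 1, fun i => add_nonneg (hc₀ i) ?_, by simp [hc₀ j], ?_, ?_⟩
    · by_cases hi : i = j <;> simp [hi]
    · simp [Finset.sum_add_distrib, hc₁]
    · simp [add_smul, Finset.sum_add_distrib, ← hc]
  · rintro ⟨a, ha₀, ha₁, ha, rfl⟩
    refine ⟨a - Pi.single j 1, fun i => ?_, ?_, ?_⟩
    · by_cases hi : i = j <;> simp [hi, ha₀ i, ha₁]
    · simp [Finset.sum_sub_distrib, ha]
    · simp [sub_smul, Finset.sum_sub_distrib]

theorem smul_convexHull_diff_iUnion_vadd_eq [Nonempty ι] (hv : AffineIndependent 𝕜 v)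
    (hr : 0 ≤ r) :
    ((r + 1) • convexHull 𝕜 (range v)) \ ⋃ j, v j +ᵥ r • convexHull 𝕜 (range v) =
      {x | ∃ a : ι → 𝕜, (∀ i, 0 ≤ a i ∧ a i < 1) ∧ ∑ i, a i = r + 1 ∧
        x = ∑ i, a i • v i} := by
  ext x
  simp only [mem_sdiff, mem_iUnion, mem_ofPred_eq, mem_vadd_smul_convexHull_range_iff hr,
    mem_smul_convexHull_range_iff (add_nonneg hr zero_le_one)]
  constructor
  · rintro ⟨⟨a, ha₀, ha, rfl⟩, hx⟩
    refine ⟨a, fun i => ⟨ha₀ i, not_le.1 fun hi => hx ⟨i, a, ha₀, hi, ha, rfl⟩⟩, ha, rfl⟩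
  · rintro ⟨a, ha, has, rfl⟩
    refine ⟨⟨a, fun i => (ha i).1, has, rfl⟩, ?_⟩
    rintro ⟨j, b, -, hb₁, hbs, hb⟩
    have hab : a j = b j :=
      hv.eq_of_sum_eq_sum (s := Finset.univ) (has.trans hbs.symm) hb j (Finset.mem_univ j)
    exact (ha j).2.not_ge (hab ▸ hb₁)

end

theorem stmt15_general (n d : ℕ) (v : Fin (d + 1) → (Fin n → ℝ)) (hv : AffineIndependent ℝ v)
    (t : ℤ) (ht1 : -(d : ℤ) - 1 < t) :
    (((t : ℝ) + d + 1) • convexHull ℝ (Set.range v)) \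
        (⋃ j, v j +ᵥ (((t : ℝ) + d) • convexHull ℝ (Set.range v))) =
      {x | ∃ a : Fin (d + 1) → ℝ, (∀ i, 0 ≤ a i ∧ a i < 1) ∧
        (∑ i, a i) = (t : ℝ) + d + 1 ∧ x = ∑ i, a i • v i} := by
  have ht : (-d : ℝ) ≤ t := by exact_mod_cast (by omega : -(d : ℤ) ≤ t)
  exact smul_convexHull_diff_iUnion_vadd_eq hv (by linarith)

theorem stmt15 (n d : ℕ) (v : Fin (d + 1) → (Fin n → ℝ)) (hv : AffineIndependent ℝ v)
    (t : ℤ) (ht0 : t < 0) (ht1 : -(d : ℤ) - 1 < t) :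
    (((t : ℝ) + d + 1) • convexHull ℝ (Set.range v)) \
        (⋃ j, v j +ᵥ (((t : ℝ) + d) • convexHull ℝ (Set.range v))) =
      {x | ∃ a : Fin (d + 1) → ℝ, (∀ i, 0 ≤ a i ∧ a i < 1) ∧
        (∑ i, a i) = (t : ℝ) + d + 1 ∧ x = ∑ i, a i • v i} :=
  stmt15_general n d v hv t ht1
end
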